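/- Let ω = e^{i2π/3} and F(z) = (z-ω)⁴/(z(z+1)(z-1)(z+2)(z+1/2)). Then the residues of F at its five simple poles are: Res_{z=-2} F = e^{i2π/3}, Res_{z=-1} F = e^{iπ/3}, Res_{z=-1/2} F = 1, Res_{z=0} F = e^{-iπ/3}, and Res_{z=1} F = e^{-i2π/3}. In particular every residue has modulus 1. -/

import Mathlib

open Complex Filter Topology

/-- The rational function F(z) = (z-ω)⁴/(z(z+1)(z-1)(z+2)(z+1/2)), ω = e^{i2π/3}. -/
noncomputable def hexFG (z : ℂ) : ℂ :=
  (z - Complex.exp (2 * Real.pi * Complex.I / 3))^4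
    / (z * (z + 1) * (z - 1) * (z + 2) * (z + 1/2))

/-- The residue of `F` at a simple pole `p`, characterized as the limit of `(z-p)·F(z)`
as `z → p` (within `{p}ᶜ`). -/
def IsResidueAt (F : ℂ → ℂ) (p r : ℂ) : Prop :=
  Tendsto (fun z => (z - p) * F z) (𝓝[≠] p) (𝓝 r)

/-! With `ζ = e^{iπ/3}` we have `ζ² = ζ - 1`, so `ω = ζ - 1` and the five claimed residues
are `ζ - 1, ζ, 1, 1 - ζ` and `-ζ`. The residue `N(p)/D'(p)` of `F = N/D` at each pole is computed
by splitting off the factor `z - p` of `D`, and the identity `N(p) = r D'(p)` is then a polynomial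
identity in `ζ` modulo `ζ² - ζ + 1`. -/

theorem hasDerivAt_of_eq_sub_mul {𝕜 : Type*} [NontriviallyNormedField 𝕜] {D R : 𝕜 → 𝕜} {p : 𝕜}
    (hD : ∀ z, D z = (z - p) * R z) (hR : ContinuousAt R p) : HasDerivAt D (R p) p := by
  rw [hasDerivAt_iff_tendsto_slope]
  refine (hR.tendsto.mono_left nhdsWithin_le_nhds).congr' ?_
  filter_upwards [self_mem_nhdsWithin] with z hz
  rw [slope_def_field, hD, hD, sub_self, zero_mul, sub_zero,
    mul_div_cancel_left₀ _ (sub_ne_zero.2 hz)]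

theorem isResidueAt_div_of_hasDerivAt {N D : ℂ → ℂ} {p d : ℂ} (hN : ContinuousAt N p)
    (hD : HasDerivAt D d p) (hDp : D p = 0) (hd : d ≠ 0) :
    IsResidueAt (fun z => N z / D z) p (N p / d) := by
  have hslope := (hN.tendsto.mono_left nhdsWithin_le_nhds).div
    (hasDerivAt_iff_tendsto_slope.1 hD) hd
  refine hslope.congr' ?_
  filter_upwards with z
  rw [Pi.div_apply, slope_def_field, hDp, sub_zero, div_div_eq_mul_div, mul_comm, mul_div_assoc]

theorem isResidueAt_hexFG {p r : ℂ} (R : ℂ → ℂ)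
    (hD : ∀ z, z * (z + 1) * (z - 1) * (z + 2) * (z + 1/2) = (z - p) * R z)
    (hR : ContinuousAt R p) (hRp : R p ≠ 0)
    (hr : (p - exp (2 * Real.pi * I / 3)) ^ 4 = r * R p) :
    IsResidueAt hexFG p r := by
  have h := isResidueAt_div_of_hasDerivAt (N := fun z => (z - exp (2 * Real.pi * I / 3)) ^ 4)
    (D := fun z => z * (z + 1) * (z - 1) * (z + 2) * (z + 1/2)) (by fun_prop)
    (hasDerivAt_of_eq_sub_mul hD hR) (by rw [hD, sub_self, zero_mul]) hRp
  rwa [hr, mul_div_cancel_right₀ _ hRp] at h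

theorem exp_pi_I_div_three_sq : exp (Real.pi * I / 3) ^ 2 = exp (Real.pi * I / 3) - 1 := by
  have hζ : exp (Real.pi * I / 3) = 1 / 2 + Real.sqrt 3 / 2 * I := by
    rw [show (Real.pi : ℂ) * I / 3 = ((Real.pi / 3 : ℝ) : ℂ) * I by push_cast; ring, exp_mul_I,
      ← ofReal_cos, ← ofReal_sin, Real.cos_pi_div_three, Real.sin_pi_div_three]
    push_cast; ring
  have hsqrt : ((Real.sqrt 3 : ℝ) : ℂ) ^ 2 = 3 := by
    rw [← ofReal_pow, Real.sq_sqrt (by norm_num)]; norm_num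
  rw [hζ]
  linear_combination I ^ 2 / 4 * hsqrt + (3 / 4 : ℂ) * I_sq

theorem stmt_4 :
    IsResidueAt hexFG (-2) (Complex.exp (2 * Real.pi * Complex.I / 3)) ∧
    IsResidueAt hexFG (-1) (Complex.exp (Real.pi * Complex.I / 3)) ∧
    IsResidueAt hexFG (-1/2) 1 ∧
    IsResidueAt hexFG 0 (Complex.exp (-(Real.pi * Complex.I) / 3)) ∧
    IsResidueAt hexFG 1 (Complex.exp (-(2 * Real.pi * Complex.I) / 3)) ∧
    (∀ r : ℂ, r ∈ ({Complex.exp (2 * Real.pi * Complex.I / 3),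
        Complex.exp (Real.pi * Complex.I / 3), 1,
        Complex.exp (-(Real.pi * Complex.I) / 3),
        Complex.exp (-(2 * Real.pi * Complex.I) / 3)} : Set ℂ) → ‖r‖ = 1) := by
  have hζ := exp_pi_I_div_three_sq
  set ζ := exp (Real.pi * I / 3)
  have hω : exp (2 * Real.pi * I / 3) = ζ - 1 := by
    rw [← hζ, ← exp_nat_mul]; push_cast; ring_nf
  have hζinv : exp (-(Real.pi * I) / 3) = 1 - ζ := by
    rw [neg_div, exp_neg]; exact inv_eq_of_mul_eq_one_right (by linear_combination -hζ)
  have hωinv : exp (-(2 * Real.pi * I) / 3) = -ζ := by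
    rw [neg_div, exp_neg, hω]; exact inv_eq_of_mul_eq_one_right (by linear_combination -hζ)
  refine ⟨?_, ?_, ?_, ?_, ?_, ?_⟩
  · exact isResidueAt_hexFG (fun z => z * (z + 1) * (z - 1) * (z + 1/2)) (fun z => by ring)
      (by fun_prop) (by norm_num) (by rw [hω]; linear_combination (ζ ^ 2 + 5 * ζ + 10) * hζ)
  · exact isResidueAt_hexFG (fun z => z * (z - 1) * (z + 2) * (z + 1/2)) (fun z => by ring)
      (by fun_prop) (by norm_num) (by rw [hω]; linear_combination (ζ ^ 2 + ζ) * hζ)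
  · exact isResidueAt_hexFG (fun z => z * (z + 1) * (z - 1) * (z + 2)) (fun z => by ring)
      (by fun_prop) (by norm_num) (by rw [hω]; linear_combination (ζ ^ 2 - ζ - 1/2) * hζ)
  · rw [hζinv]
    exact isResidueAt_hexFG (fun z => (z + 1) * (z - 1) * (z + 2) * (z + 1/2)) (fun z => by ring)
      (by fun_prop) (by norm_num) (by rw [hω]; linear_combination (ζ ^ 2 - 3 * ζ + 2) * hζ)
  · rw [hωinv]
    exact isResidueAt_hexFG (fun z => z * (z + 1) * (z + 2) * (z + 1/2)) (fun z => by ring)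
      (by fun_prop) (by norm_num) (by rw [hω]; linear_combination (ζ ^ 2 - 7 * ζ + 16) * hζ)
  · rintro r (rfl | rfl | rfl | rfl | rfl) <;> simp [ζ, norm_exp]
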